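/- Let a₁, ..., a_{2n-1} be distinct nonzero points of 𝔻 with a₁ + \bar{a₁}a_{2j}a_{2j+1} = a_{2j} + a_{2j+1} for j = 1, ..., n-1, and B(z) = z ∏_{k=1}^{2n-1}(z-a_k)/(1-\bar{a_k}z). Then B = B₂ ∘ B₁ where B₁(z) = z(z-a₁)/(1-\bar{a₁}z) and B₂(z) = z ∏_{j=1}^{n-1}(z + a_{2j}a_{2j+1})/(1 + \overline{a_{2j}a_{2j+1}}z). -/

import Mathlib

/-!
Writing `B₁ z = z · φ_{a₁}(z)` with `φ_a(z) = (z - a)/(1 - ā z)`, the zero condition is exactly what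
makes `φ_b · φ_c = φ_{-bc} ∘ B₁` for each pair `(b, c) = (a_{2j}, a_{2j+1})`: clearing the denominator
`1 - ā₁ z`, both sides reduce to `(z - b)(z - c) / ((1 - b̄ z)(1 - c̄ z))`. Grouping the factors of `B`
as `z · φ_{a₁}` times these pairs gives `B = B₂ ∘ B₁`.
-/

section BlaschkeFactor

variable {K : Type*} [Field K] [StarRing K]

def blaschkeFactor (a z : K) : K := (z - a) / (1 - starRingEnd K a * z)

theorem blaschkeFactor_mul_blaschkeFactor {a b c z : K} (hd : 1 - starRingEnd K a * z ≠ 0)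
    (h : a + starRingEnd K a * b * c = b + c) :
    blaschkeFactor b z * blaschkeFactor c z =
      blaschkeFactor (-(b * c)) (z * blaschkeFactor a z) := by
  set d := 1 - starRingEnd K a * z
  have hconj : starRingEnd K a + a * starRingEnd K b * starRingEnd K c =
      starRingEnd K b + starRingEnd K c := by
    simpa only [map_add, map_mul, starRingEnd_self_apply] using congrArg (starRingEnd K) h
  have hnum : z * ((z - a) / d) - -(b * c) = (z - b) * (z - c) / d := by
    rw [eq_div_iff hd, sub_mul, mul_assoc, div_mul_cancel₀ _ hd]
    linear_combination (-z) * h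
  have hden : 1 - starRingEnd K (-(b * c)) * (z * ((z - a) / d)) =
      (1 - starRingEnd K b * z) * (1 - starRingEnd K c * z) / d := by
    rw [eq_div_iff hd, sub_mul, mul_assoc, mul_assoc, div_mul_cancel₀ _ hd, map_neg, map_mul]
    linear_combination (-z) * hconj
  rw [blaschkeFactor, blaschkeFactor, blaschkeFactor, blaschkeFactor, div_mul_div_comm, hnum, hden,
    div_div_div_cancel_right₀ hd]

end BlaschkeFactor

theorem one_sub_conj_mul_ne_zero {K : Type*} [RCLike K] {a z : K} (ha : ‖a‖ ≤ 1) (hz : ‖z‖ < 1) :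
    1 - starRingEnd K a * z ≠ 0 := by
  rw [sub_ne_zero]
  intro h
  have : ‖starRingEnd K a * z‖ < 1 := by
    rw [norm_mul, RCLike.norm_conj]
    nlinarith [norm_nonneg a, norm_nonneg z]
  simp [← h] at this

theorem Finset.prod_Icc_one_two_mul_add_one {M : Type*} [CommMonoid M] (f : ℕ → M) (m : ℕ) :
    ∏ k ∈ Icc 1 (2 * m + 1), f k = f 1 * ∏ j ∈ Icc 1 m, f (2 * j) * f (2 * j + 1) := by
  induction m with
  | zero => simp
  | succ m ih =>
    rw [show 2 * (m + 1) + 1 = 2 * m + 1 + 1 + 1 by ring, prod_Icc_succ_top (by omega),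
      prod_Icc_succ_top (by omega), ih, prod_Icc_succ_top (by omega)]
    simp only [mul_assoc]
    rfl

theorem degree_2n_decomposition_general (n : ℕ) (hn : 2 ≤ n) (a : ℕ → ℂ)
    (ha : ∀ k ∈ Finset.Icc 1 (2 * n - 1), ‖a k‖ < 1)
    (hcond : ∀ j ∈ Finset.Icc 1 (n - 1),
      a 1 + (starRingEnd ℂ) (a 1) * a (2 * j) * a (2 * j + 1) =
        a (2 * j) + a (2 * j + 1)) :
    ∀ z : ℂ, ‖z‖ < 1 →
      z * ∏ k ∈ Finset.Icc 1 (2 * n - 1),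
        (z - a k) / (1 - (starRingEnd ℂ) (a k) * z) =
      (z * ((z - a 1) / (1 - (starRingEnd ℂ) (a 1) * z))) *
        ∏ j ∈ Finset.Icc 1 (n - 1),
          ((z * ((z - a 1) / (1 - (starRingEnd ℂ) (a 1) * z))) + a (2 * j) * a (2 * j + 1)) /
          (1 + (starRingEnd ℂ) (a (2 * j) * a (2 * j + 1)) *
            (z * ((z - a 1) / (1 - (starRingEnd ℂ) (a 1) * z)))) := by
  intro z hz
  have hd : 1 - starRingEnd ℂ (a 1) * z ≠ 0 :=
    one_sub_conj_mul_ne_zero (ha 1 (Finset.mem_Icc.2 ⟨le_rfl, by omega⟩)).le hz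
  rw [show 2 * n - 1 = 2 * (n - 1) + 1 by omega, Finset.prod_Icc_one_two_mul_add_one, ← mul_assoc]
  refine congrArg _ (Finset.prod_congr rfl fun j hj => ?_)
  simpa only [blaschkeFactor, map_neg, neg_mul, sub_neg_eq_add] using
    blaschkeFactor_mul_blaschkeFactor hd (hcond j hj)

/-- A degree-`2n` Blaschke product whose zeros satisfy
`a₁ + conj a₁ · a_{2j} a_{2j+1} = a_{2j} + a_{2j+1}` for `j = 1, …, n-1`
decomposes as `B = B₂ ∘ B₁` with `B₁ z = z (z - a₁)/(1 - conj a₁ z)` and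
`B₂ w = w ∏_{j=1}^{n-1} (w + a_{2j} a_{2j+1})/(1 + conj (a_{2j} a_{2j+1}) w)`. -/
theorem degree_2n_decomposition (n : ℕ) (hn : 2 ≤ n) (a : ℕ → ℂ)
    (ha : ∀ k ∈ Finset.Icc 1 (2 * n - 1), ‖a k‖ < 1)
    (ha0 : ∀ k ∈ Finset.Icc 1 (2 * n - 1), a k ≠ 0)
    (hainj : Set.InjOn a (Finset.Icc 1 (2 * n - 1)))
    (hcond : ∀ j ∈ Finset.Icc 1 (n - 1),
      a 1 + (starRingEnd ℂ) (a 1) * a (2 * j) * a (2 * j + 1) =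
        a (2 * j) + a (2 * j + 1)) :
    ∀ z : ℂ, ‖z‖ < 1 →
      z * ∏ k ∈ Finset.Icc 1 (2 * n - 1),
        (z - a k) / (1 - (starRingEnd ℂ) (a k) * z) =
      (z * ((z - a 1) / (1 - (starRingEnd ℂ) (a 1) * z))) *
        ∏ j ∈ Finset.Icc 1 (n - 1),
          ((z * ((z - a 1) / (1 - (starRingEnd ℂ) (a 1) * z))) + a (2 * j) * a (2 * j + 1)) /
          (1 + (starRingEnd ℂ) (a (2 * j) * a (2 * j + 1)) *
            (z * ((z - a 1) / (1 - (starRingEnd ℂ) (a 1) * z)))) :=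
  degree_2n_decomposition_general n hn a ha hcond
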